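/- For the family {p₁ = (1-a, a, 0), p₂ = (0, a, 1-a)} with 0 < a < 1, the mixture q* = ((1-a)/2, a, (1-a)/2) minimizes max(KL(p₁‖q), KL(p₂‖q)) over all probability distributions q on the three-element set, achieving the value (1-a)·log 2. -/

import Mathlib

open Finset
open scoped Classical

/-- Kullback–Leibler divergence with values in `EReal`: terms with `p x = 0`
contribute `0`, and `KL(p‖q) = +∞` if `q x = 0 < p x` for some `x`. -/
noncomputable def klE {α : Type*} [Fintype α] (p q : α → ℝ) : EReal :=
  ∑ x, if p x = 0 then (0 : EReal) else if q x = 0 then ⊤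
    else ((p x * Real.log (p x / q x) : ℝ) : EReal)

lemma ite_top_coe_ne_bot (c : Prop) [Decidable c] (r : ℝ) :
    (if c then (⊤ : EReal) else ((r : ℝ) : EReal)) ≠ ⊥ := by
  split_ifs
  · simp
  · exact EReal.coe_ne_bot _

lemma key_log (x y : ℝ) (hx : 0 < x) (hy : 0 < y) :
    x - y ≤ x * Real.log (x / y) := by
  have h := Real.log_le_sub_one_of_pos (div_pos hy hx)
  rw [Real.log_div hy.ne' hx.ne'] at h
  rw [Real.log_div hx.ne' hy.ne']
  have hxy : x * (y / x) = y := by field_simp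
  nlinarith [mul_le_mul_of_nonneg_left h hx.le]

/-- The mixture `q* = ((1-a)/2, a, (1-a)/2)` minimizes `max(KL(p₁‖q), KL(p₂‖q))`
over all pmfs `q` on the three-element set, achieving the value `(1-a)·log 2`. -/
theorem minimax_redundancy (a : ℝ) (ha : 0 < a) (ha1 : a < 1) :
    (∀ q : Fin 3 → ℝ, (∀ x, 0 ≤ q x) → (∑ x, q x = 1) →
        (((1 - a) * Real.log 2 : ℝ) : EReal)
          ≤ max (klE ![1 - a, a, 0] q) (klE ![0, a, 1 - a] q)) ∧
    max (klE ![1 - a, a, 0] ![(1 - a) / 2, a, (1 - a) / 2])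
        (klE ![0, a, 1 - a] ![(1 - a) / 2, a, (1 - a) / 2])
      = (((1 - a) * Real.log 2 : ℝ) : EReal) := by
  have hb : 0 < 1 - a := by linarith
  have hbne : (1 - a) ≠ 0 := hb.ne'
  have hane : a ≠ 0 := ha.ne'
  have hhalf : (1 - a) / 2 ≠ 0 := by positivity
  constructor
  · intro q hq hqs
    rw [Fin.sum_univ_three] at hqs
    by_cases h0 : q 0 = 0
    · simp only [klE, Fin.sum_univ_three, Matrix.cons_val_zero, Matrix.cons_val_one,
        Matrix.head_cons, Matrix.cons_val_two, Matrix.tail_cons, if_pos rfl, if_true,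
        if_neg hbne, if_neg hane, if_pos h0, zero_add, add_zero, hbne, hane, h0,
        ite_true, ite_false, eq_self_iff_true]
      rw [EReal.top_add_of_ne_bot (ite_top_coe_ne_bot _ _)]
      exact le_trans le_top (le_max_left _ _)
    · by_cases h1 : q 1 = 0
      · simp only [klE, Fin.sum_univ_three, Matrix.cons_val_zero, Matrix.cons_val_one,
          Matrix.head_cons, Matrix.cons_val_two, Matrix.tail_cons, if_pos rfl, if_true,
          if_neg hbne, if_neg hane, if_neg h0, if_pos h1, zero_add, add_zero, hbne, hane, h0, h1,
          ite_true, ite_false, eq_self_iff_true]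
        rw [EReal.add_top_of_ne_bot (EReal.coe_ne_bot _)]
        exact le_trans le_top (le_max_left _ _)
      · by_cases h2 : q 2 = 0
        · simp only [klE, Fin.sum_univ_three, Matrix.cons_val_zero, Matrix.cons_val_one,
            Matrix.head_cons, Matrix.cons_val_two, Matrix.tail_cons, if_pos rfl, if_true,
            if_neg hbne, if_neg hane, if_neg h0, if_neg h1, if_pos h2, zero_add, add_zero, hbne, hane,
            h0, h1, h2, ite_true, ite_false, eq_self_iff_true]
          rw [EReal.add_top_of_ne_bot (EReal.coe_ne_bot _)]
          exact le_trans le_top (le_max_right _ _)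
        · have hq0 : 0 < q 0 := (hq 0).lt_of_ne' h0
          have hq1 : 0 < q 1 := (hq 1).lt_of_ne' h1
          have hq2 : 0 < q 2 := (hq 2).lt_of_ne' h2
          simp only [klE, Fin.sum_univ_three, Matrix.cons_val_zero, Matrix.cons_val_one,
            Matrix.head_cons, Matrix.cons_val_two, Matrix.tail_cons, if_pos rfl, if_true,
            if_neg hbne, if_neg hane, if_neg h0, if_neg h1, if_neg h2, zero_add, add_zero, hbne, hane,
            h0, h1, h2, ite_true, ite_false]
          rw [← EReal.coe_add, ← EReal.coe_add]
          set L0 := Real.log ((1 - a) / q 0)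
          set L1 := Real.log (a / q 1)
          set L2 := Real.log ((1 - a) / q 2)
          have k0 : (1 - a) / 2 - q 0 ≤ (1 - a) / 2 * (L0 - Real.log 2) := by
            have h := key_log ((1 - a) / 2) (q 0) (by positivity) hq0
            have he : ((1 - a) / 2) / q 0 = ((1 - a) / q 0) / 2 := by ring
            rwa [he, Real.log_div (by positivity) two_ne_zero] at h
          have k2 : (1 - a) / 2 - q 2 ≤ (1 - a) / 2 * (L2 - Real.log 2) := by
            have h := key_log ((1 - a) / 2) (q 2) (by positivity) hq2
            have he : ((1 - a) / 2) / q 2 = ((1 - a) / q 2) / 2 := by ring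
            rwa [he, Real.log_div (by positivity) two_ne_zero] at h
          have k1 : a - q 1 ≤ a * L1 := key_log a (q 1) ha hq1
          rcases le_total ((1 - a) * L0 + a * L1) (a * L1 + (1 - a) * L2) with h | h
          · refine le_trans ?_ (le_max_right _ _)
            exact EReal.coe_le_coe_iff.mpr (by nlinarith)
          · refine le_trans ?_ (le_max_left _ _)
            exact EReal.coe_le_coe_iff.mpr (by nlinarith)
  · simp only [klE, Fin.sum_univ_three, Matrix.cons_val_zero, Matrix.cons_val_one,
      Matrix.head_cons, Matrix.cons_val_two, Matrix.tail_cons, if_pos rfl, if_true,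
      if_neg hbne, if_neg hane, if_neg hhalf, zero_add, add_zero, hbne, hane, hhalf,
        ite_true, ite_false]
    have h2 : (1 - a) / ((1 - a) / 2) = 2 := by field_simp
    have hlog : Real.log (a / a) = 0 := by rw [div_self hane, Real.log_one]
    rw [h2, hlog, mul_zero, EReal.coe_zero, add_zero, zero_add, max_self]
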